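/- arXiv:0912.4522 — 5 statements merged into one kernel-verified Lean document; each statement's English description precedes it below -/
import Mathlib

section
/- For every μ > 0, the function q(x,t) = x^(μ−1) e^(−x/t) / (t^μ Γ(μ)), defined for x > 0 and t > 0, satisfies the second-order partial differential equation ∂q/∂t = x ∂²q/∂x² − (μ−2) ∂q/∂x for all x > 0 and t > 0. -/
/-!
Up to the constant factor `1 / Γ(μ)`, `q` is `k(x, t) = x^(μ-1) e^(-x/t) / t^μ`, and every
derivative of `k` is `k` times a rational function: `∂ₜk = (x/t - μ)/t · k`,
`∂ₓk = ((μ-1)/x - 1/t) · k` and `∂ₓ²k = (((μ-1)/x - 1/t)² - (μ-1)/x²) · k`.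
The equation for `k` is then an identity between rational functions of `x` and `t`, and it passes
to `q` because differentiation commutes with division by a constant.
-/

open Real Filter Topology

noncomputable def gammaKernel (μ x t : ℝ) : ℝ := x ^ (μ - 1) * exp (-x / t) / t ^ μ

section GammaKernel

variable {μ x t : ℝ}

theorem hasDerivAt_gammaKernel_fst (hx : x ≠ 0) :
    HasDerivAt (fun ξ => gammaKernel μ ξ t) (((μ - 1) / x - 1 / t) * gammaKernel μ x t) x := by
  have hpow : HasDerivAt (fun ξ : ℝ => ξ ^ (μ - 1)) ((μ - 1) * x ^ (μ - 1 - 1)) x :=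
    hasDerivAt_rpow_const (Or.inl hx)
  have hexp : HasDerivAt (fun ξ : ℝ => exp (-ξ / t)) (exp (-x / t) * (-1 / t)) x :=
    ((hasDerivAt_id x).neg.div_const t).exp
  refine ((hpow.mul hexp).div_const (t ^ μ)).congr_deriv ?_
  rw [gammaKernel, rpow_sub_one hx]
  field_simp
  ring

theorem deriv_gammaKernel_fst_eventuallyEq (hx : 0 < x) :
    deriv (fun ξ => gammaKernel μ ξ t) =ᶠ[𝓝 x]
      fun ξ => ((μ - 1) / ξ - 1 / t) * gammaKernel μ ξ t := by
  filter_upwards [Ioi_mem_nhds hx] with ξ hξ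
  exact (hasDerivAt_gammaKernel_fst (ne_of_gt hξ)).deriv

theorem hasDerivAt_deriv_gammaKernel_fst (hx : 0 < x) :
    HasDerivAt (deriv fun ξ => gammaKernel μ ξ t)
      ((((μ - 1) / x - 1 / t) ^ 2 - (μ - 1) / x ^ 2) * gammaKernel μ x t) x := by
  have hcoeff : HasDerivAt (fun ξ : ℝ => (μ - 1) / ξ - 1 / t) (-(μ - 1) / x ^ 2) x := by
    refine (((hasDerivAt_inv hx.ne').const_mul (μ - 1)).sub_const (1 / t)).congr_deriv ?_
    ring
  refine HasDerivAt.congr_of_eventuallyEq ?_ (deriv_gammaKernel_fst_eventuallyEq hx)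
  refine (hcoeff.mul (hasDerivAt_gammaKernel_fst hx.ne')).congr_deriv ?_
  ring

theorem hasDerivAt_gammaKernel_snd (ht : 0 < t) :
    HasDerivAt (fun τ => gammaKernel μ x τ) ((x / t - μ) / t * gammaKernel μ x t) t := by
  have hexp : HasDerivAt (fun τ : ℝ => x ^ (μ - 1) * exp (-x / τ))
      (x ^ (μ - 1) * (exp (-x / t) * (x / t ^ 2))) t := by
    have hinv : HasDerivAt (fun τ : ℝ => -x / τ) (x / t ^ 2) t := by
      simpa [div_eq_mul_inv] using (hasDerivAt_inv ht.ne').const_mul (-x)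
    exact hinv.exp.const_mul _
  have hpow : HasDerivAt (fun τ : ℝ => τ ^ μ) (μ * t ^ (μ - 1)) t :=
    hasDerivAt_rpow_const (Or.inl ht.ne')
  have htμ : t ^ μ ≠ 0 := (rpow_pos_of_pos ht μ).ne'
  refine (hexp.div hpow htμ).congr_deriv ?_
  rw [gammaKernel, rpow_sub_one ht.ne']
  field_simp

theorem deriv_gammaKernel_snd_eq (hx : 0 < x) (ht : 0 < t) :
    deriv (fun τ => gammaKernel μ x τ) t
      = x * deriv (deriv fun ξ => gammaKernel μ ξ t) x
        - (μ - 2) * deriv (fun ξ => gammaKernel μ ξ t) x := by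
  rw [(hasDerivAt_gammaKernel_snd ht).deriv, (hasDerivAt_deriv_gammaKernel_fst hx).deriv,
    (hasDerivAt_gammaKernel_fst hx.ne').deriv]
  field_simp
  ring

end GammaKernel

theorem stmt_0_general (μ : ℝ)
    (q : ℝ → ℝ → ℝ)
    (hq : ∀ x t : ℝ, q x t = x ^ (μ - 1) * Real.exp (-x / t) / (t ^ μ * Real.Gamma μ)) :
    ∀ x t : ℝ, 0 < x → 0 < t →
      deriv (fun τ => q x τ) t
        = x * deriv (deriv (fun ξ => q ξ t)) x - (μ - 2) * deriv (fun ξ => q ξ t) x := by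
  intro x t hx ht
  have hq_kernel : q = fun ξ τ => gammaKernel μ ξ τ / Gamma μ := by
    funext ξ τ
    rw [hq, gammaKernel, div_mul_eq_div_div]
  have hderiv_fst :
      deriv (fun ξ => q ξ t) = fun ξ => deriv (fun ξ => gammaKernel μ ξ t) ξ / Gamma μ := by
    funext ξ
    simp only [hq_kernel, deriv_div_const]
  rw [hderiv_fst, deriv_div_const]
  simp only [hq_kernel, deriv_div_const]
  rw [deriv_gammaKernel_snd_eq hx ht]
  ring

/-- The Gamma process density `q(x,t) = x^(μ−1) e^(−x/t) / (t^μ Γ(μ))`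
satisfies `∂q/∂t = x ∂²q/∂x² − (μ−2) ∂q/∂x` for all `x > 0`, `t > 0`. -/
theorem stmt_0 (μ : ℝ) (hμ : 0 < μ)
    (q : ℝ → ℝ → ℝ)
    (hq : ∀ x t : ℝ, q x t = x ^ (μ - 1) * Real.exp (-x / t) / (t ^ μ * Real.Gamma μ)) :
    ∀ x t : ℝ, 0 < x → 0 < t →
      deriv (fun τ => q x τ) t
        = x * deriv (deriv (fun ξ => q ξ t)) x - (μ - 2) * deriv (fun ξ => q ξ t) x :=
  stmt_0_general μ q hq
end

section
/- For every μ > 0 and γ > 0, the function q(x,t) = Q(x;t,μ,γ) = γ x^(γμ−1) e^(−x^γ/t) / (t^μ Γ(μ)) satisfies, for all x > 0 and t > 0, the partial differential equation ∂q/∂t = (1/γ²) [ ∂/∂x ( x^(2−γ) ∂q/∂x ) − (γμ − 1) ∂/∂x ( x^(1−γ) q ) ]. -/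
/-!
Both partial derivatives of `q = Q(·;t,μ,γ)` are `q` times an explicit factor:
`∂ₓq = q ((γμ - 1)/x - γ x^(γ-1)/t)` and `∂ₜq = q (x^γ/t² - μ/t)`. Hence the flux
`x^(2-γ) ∂ₓq - (γμ - 1) x^(1-γ) q` collapses to `-(γ/t) x q`, whose `x`-derivative is
`-(γ/t) q (γμ - γ x^γ/t) = γ² ∂ₜq`.
-/

noncomputable def Q (x t μ γ : ℝ) : ℝ :=
  γ * x ^ (γ * μ - 1) * Real.exp (-(x ^ γ) / t) / (t ^ μ * Real.Gamma μ)

section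

variable {x t μ γ : ℝ}

theorem hasDerivAt_Q_space (hx : 0 < x) :
    HasDerivAt (fun y => Q y t μ γ) (Q x t μ γ * ((γ * μ - 1) / x - γ * x ^ (γ - 1) / t)) x := by
  have hpow := (Real.hasDerivAt_rpow_const (p := γ * μ - 1) (Or.inl hx.ne')).const_mul γ
  have hexp := ((Real.hasDerivAt_rpow_const (p := γ) (Or.inl hx.ne')).fun_neg.div_const t).exp
  refine ((hpow.mul hexp).div_const (t ^ μ * Real.Gamma μ)).congr_deriv ?_
  rw [Q, Real.rpow_sub_one hx.ne' (γ * μ - 1)]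
  field_simp
  ring

theorem hasDerivAt_Q_time (ht : 0 < t) :
    HasDerivAt (fun τ => Q x τ μ γ) (Q x t μ γ * (x ^ γ / t ^ 2 - μ / t)) t := by
  have hexp := ((hasDerivAt_const t (-(x ^ γ))).fun_div (hasDerivAt_id' t) ht.ne').exp
  have hpow := Real.hasDerivAt_rpow_const (p := μ) (Or.inl ht.ne')
  have hQ := ((hexp.const_mul (γ * x ^ (γ * μ - 1))).fun_div hpow
    (Real.rpow_pos_of_pos ht μ).ne').div_const (Real.Gamma μ)
  simp only [div_div] at hQ
  refine hQ.congr_deriv ?_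
  rw [Q, Real.rpow_sub_one ht.ne']
  field_simp
  ring

theorem Q_flux_eq (hx : 0 < x) :
    x ^ (2 - γ) * deriv (fun y => Q y t μ γ) x
      = (γ * μ - 1) * (x ^ (1 - γ) * Q x t μ γ) - γ / t * (x * Q x t μ γ) := by
  have hdiv : x ^ (2 - γ) / x = x ^ (1 - γ) := by
    rw [← Real.rpow_sub_one hx.ne']
    ring_nf
  have hmul : x ^ (2 - γ) * x ^ (γ - 1) = x := by
    rw [← Real.rpow_add hx]
    norm_num
  rw [(hasDerivAt_Q_space hx).deriv]
  linear_combination (γ * μ - 1) * Q x t μ γ * hdiv - γ * Q x t μ γ / t * hmul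

end

theorem stmt_2_general (μ γ : ℝ) (hγ : 0 < γ) :
    ∀ x t : ℝ, 0 < x → 0 < t →
      deriv (fun τ => Q x τ μ γ) t
        = (1 / γ ^ 2) *
            (deriv (fun ξ => ξ ^ (2 - γ) * deriv (fun y => Q y t μ γ) ξ) x
              - (γ * μ - 1) * deriv (fun ξ => ξ ^ (1 - γ) * Q ξ t μ γ) x) := by
  intro x t hx ht
  have hQ := hasDerivAt_Q_space (t := t) (μ := μ) (γ := γ) hx
  have hdrift := (Real.hasDerivAt_rpow_const (p := 1 - γ) (Or.inl hx.ne')).fun_mul hQ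
  have hflux : HasDerivAt (fun ξ => ξ ^ (2 - γ) * deriv (fun y => Q y t μ γ) ξ)
      ((γ * μ - 1) * _ - γ / t * (1 * Q x t μ γ + x * _)) x :=
    ((hdrift.const_mul _).sub (((hasDerivAt_id' x).mul hQ).const_mul _)).congr_of_eventuallyEq
      (eventually_gt_nhds hx |>.mono fun ξ hξ => Q_flux_eq hξ)
  rw [(hasDerivAt_Q_time ht).deriv, hflux.deriv, hdrift.deriv, Real.rpow_sub_one hx.ne' γ]
  field_simp
  ring

/-- the generalized Gamma density satisfies
`∂q/∂t = (1/γ²) [ ∂/∂x ( x^(2−γ) ∂q/∂x ) − (γμ − 1) ∂/∂x ( x^(1−γ) q ) ]`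
for all `x > 0`, `t > 0`. -/
theorem stmt_2 (μ γ : ℝ) (hμ : 0 < μ) (hγ : 0 < γ) :
    ∀ x t : ℝ, 0 < x → 0 < t →
      deriv (fun τ => Q x τ μ γ) t
        = (1 / γ ^ 2) *
            (deriv (fun ξ => ξ ^ (2 - γ) * deriv (fun y => Q y t μ γ) ξ) x
              - (γ * μ - 1) * deriv (fun ξ => ξ ^ (1 - γ) * Q ξ t μ γ) x) :=
  stmt_2_general μ γ hγ
end

section
/- For every μ > 0, γ > 0, t > 0 and every real η with η < γμ + 1, the Mellin transform of the inverse generalized Gamma density satisfies ∫₀^∞ x^(η−1) · γ x^(−γμ−1) e^(−1/(x^γ t)) / (t^μ Γ(μ)) dx = ( Γ((1−η)/γ + μ) / Γ(μ) ) · t^((1−η)/γ). -/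
/-!
The substitution `x ↦ x⁻¹` turns the Mellin transform of the inverse generalized Gamma density
into the Gamma-type integral `∫₀^∞ x^q e^(-b x^γ) dx` with `q = γμ - η > -1` and `b = 1/t`,
which Mathlib evaluates as `b^(-(q+1)/γ) Γ((q+1)/γ) / γ`.
-/

open MeasureTheory Real Set

theorem integral_rpow_mul_exp_neg_mul_rpow_neg {p q b : ℝ} (hp : 0 < p) (hq : q < -1)
    (hb : 0 < b) :
    ∫ x in Ioi (0 : ℝ), x ^ q * exp (-b * x ^ (-p)) =
      b ^ ((q + 1) / p) * (1 / p) * Gamma (-(q + 1) / p) := by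
  have hinv : ∫ x in Ioi (0 : ℝ), x ^ q * exp (-b * x ^ (-p)) =
      ∫ x in Ioi (0 : ℝ), x ^ (-q - 2) * exp (-b * x ^ p) := by
    rw [← integral_comp_rpow_Ioi (fun y ↦ y ^ (-q - 2) * exp (-b * y ^ p))
      (show (-1 : ℝ) ≠ 0 by norm_num)]
    refine setIntegral_congr_fun measurableSet_Ioi fun x (hx : 0 < x) ↦ ?_
    simp only [smul_eq_mul, abs_neg, abs_one, one_mul]
    rw [← rpow_mul hx.le, ← rpow_mul hx.le, ← mul_assoc, ← rpow_add hx]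
    ring_nf
  rw [hinv, integral_rpow_mul_exp_neg_mul_rpow hp (by linarith) hb]
  ring_nf

/-- the Mellin transform of the inverse generalized Gamma density
`γ x^(−γμ−1) e^(−1/(x^γ t)) / (t^μ Γ(μ))` is `(Γ((1−η)/γ + μ)/Γ(μ)) t^((1−η)/γ)`
for `η < γμ + 1`. -/
theorem stmt_4 (μ γ t η : ℝ) (hμ : 0 < μ) (hγ : 0 < γ) (ht : 0 < t)
    (hη : η < γ * μ + 1) :
    (∫ x in Set.Ioi (0:ℝ),
        x ^ (η - 1) *
          (γ * x ^ (-(γ * μ) - 1) * Real.exp (-(1 / (x ^ γ * t))) / (t ^ μ * Real.Gamma μ)))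
      = (Real.Gamma ((1 - η) / γ + μ) / Real.Gamma μ) * t ^ ((1 - η) / γ) := by
  have hintegrand : ∀ x ∈ Ioi (0 : ℝ),
      x ^ (η - 1) * (γ * x ^ (-(γ * μ) - 1) * exp (-(1 / (x ^ γ * t))) / (t ^ μ * Gamma μ)) =
        γ / (t ^ μ * Gamma μ) * (x ^ (η - γ * μ - 2) * exp (-(1 / t) * x ^ (-γ))) := by
    intro x (hx : 0 < x)
    rw [rpow_neg hx.le, show η - γ * μ - 2 = (η - 1) + (-(γ * μ) - 1) by ring, rpow_add hx]
    field_simp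
  rw [setIntegral_congr_fun measurableSet_Ioi hintegrand, integral_const_mul,
    integral_rpow_mul_exp_neg_mul_rpow_neg hγ (by linarith) (by positivity)]
  have hGamma_arg : -(η - γ * μ - 2 + 1) / γ = (1 - η) / γ + μ := by field_simp; ring
  have ht_pow : (1 / t) ^ ((η - γ * μ - 2 + 1) / γ) = t ^ ((1 - η) / γ) * t ^ μ := by
    rw [one_div, inv_rpow ht.le, ← rpow_neg ht.le, ← rpow_add ht]
    congr 1
    field_simp
    ring
  rw [hGamma_arg, ht_pow]
  have hGamma_ne : Gamma μ ≠ 0 := (Gamma_pos_of_pos hμ).ne'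
  have ht_pow_ne : t ^ μ ≠ 0 := (rpow_pos_of_pos ht μ).ne'
  field_simp
end

section
/- Fix μ > 0, n ≥ 1, parameters γ₁,…,γₙ > 0 and signs ε₁,…,εₙ ∈ {+1,−1}, and set K_j(x,t) = Q̃(x;t,μ,γ_j) if ε_j = +1 and K_j(x,t) = Q̃₋(x;t,μ,γ_j) if ε_j = −1. Define the n-fold composed density recursively by q₁(x,t) = K₁(x,t) and q_{k+1}(x,t) = ∫₀^∞ q_k(x,s) K_{k+1}(s,t) ds. Then for every t > 0 and every real η satisfying η > 1 − γ_j μ for each j with ε_j = +1 and η < 1 + γ_j μ for each j with ε_j = −1, one has ∫₀^∞ x^(η−1) q_n(x,t) dx = t^(η−1) ∏_{j=1}^n (φ_j / Γ(μ)), where φ_j = Γ((η−1)/γ_j + μ) if ε_j = +1 and φ_j = Γ((1−η)/γ_j + μ) if ε_j = −1; equivalently, this Mellin transform equals ∏_{j=1}^n ∫₀^∞ x^(η−1) K_j(x, t^(1/n)) dx, so the n-fold composition of the processes has the same distribution as the product of the n independent processes each evaluated at t^(1/n). -/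
open MeasureTheory

/-- The generalized Gamma density in scale form:
`Q̃(x;t,μ,γ) = γ (x/t)^(μγ−1) e^(−(x/t)^γ) / (t Γ(μ))`. -/
noncomputable def Qt (x t μ γ : ℝ) : ℝ :=
  γ * (x / t) ^ (μ * γ - 1) * Real.exp (-((x / t) ^ γ)) / (t * Real.Gamma μ)

/-- The inverse generalized Gamma density in scale form:
`Q̃₋(x;t,μ,γ) = γ (x/t)^(−μγ−1) e^(−(t/x)^γ) / (t Γ(μ))`. -/
noncomputable def Qtm (x t μ γ : ℝ) : ℝ :=
  γ * (x / t) ^ (-(μ * γ) - 1) * Real.exp (-((t / x) ^ γ)) / (t * Real.Gamma μ)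

/-- The `(k+1)`-fold composed density built from the kernels `K 0, K 1, …, K k`:
`q₁ = K 0` and `q_{k+1}(x,t) = ∫₀^∞ q_k(x,s) K (k+1) (s,t) ds`. -/
noncomputable def comp (K : ℕ → ℝ → ℝ → ℝ) : ℕ → ℝ → ℝ → ℝ
  | 0 => K 0
  | (k + 1) => fun x t => ∫ s in Set.Ioi (0:ℝ), comp K k x s * K (k + 1) s t

/-!
Each kernel is a scale family in its second argument: `∫₀^∞ x^(η-1) K_j(x,s) dx = s^(η-1) c_j`
with `c_j = φ_j / Γ(μ)`, by the substitution `x = s y` and Euler's integral; the inversion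
`x ↦ 1/x` turns `Q̃₋` at `η` and time `t` into `Q̃` at `2 - η` and time `1/t`. As all kernels are
nonnegative, Tonelli lets us integrate a composition in `x` first, so every composition step
multiplies the Mellin transform by the next `c_j`. The second identity is then
`t^(η-1) = ((t^(1/n))^(η-1))^n`.
-/

open Real Set
open scoped ENNReal

theorem lintegral_ofReal_integral_eq_lintegral_lintegral {α β : Type*} [MeasurableSpace α]
    [MeasurableSpace β] {μ : Measure α} {ν : Measure β} [SFinite ν] {f : α → β → ℝ}
    (hf : Measurable (Function.uncurry f)) (hf₀ : ∀ᵐ x ∂μ, 0 ≤ᵐ[ν] f x)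
    (hfin : ∫⁻ x, ∫⁻ y, ENNReal.ofReal (f x y) ∂ν ∂μ ≠ ∞) :
    ∫⁻ x, ENNReal.ofReal (∫ y, f x y ∂ν) ∂μ = ∫⁻ x, ∫⁻ y, ENNReal.ofReal (f x y) ∂ν ∂μ := by
  have hmeas : Measurable fun x => ∫⁻ y, ENNReal.ofReal (f x y) ∂ν :=
    (ENNReal.measurable_ofReal.comp hf).lintegral_prod_right'
  refine lintegral_congr_ae ?_
  filter_upwards [ae_lt_top hmeas hfin, hf₀] with x hx hx₀
  have hint : Integrable (f x) ν :=
    ⟨(hf.comp measurable_prodMk_left).aestronglyMeasurable,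
      (hasFiniteIntegral_iff_ofReal hx₀).2 hx⟩
  exact ofReal_integral_eq_lintegral_ofReal hint hx₀

section Composition

variable {K : ℕ → ℝ → ℝ → ℝ}

theorem comp_nonneg {k : ℕ} (hK : ∀ j ≤ k, ∀ x s, 0 < x → 0 < s → 0 ≤ K j x s)
    {x t : ℝ} (hx : 0 < x) (ht : 0 < t) : 0 ≤ comp K k x t := by
  induction k generalizing t with
  | zero => exact hK 0 le_rfl x t hx ht
  | succ k ih =>
    exact setIntegral_nonneg measurableSet_Ioi fun s hs =>
      mul_nonneg (ih (fun j hj => hK j (by omega)) hs) (hK (k + 1) le_rfl s t hs ht)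

theorem measurable_uncurry_comp {k : ℕ} (hK : ∀ j ≤ k, Measurable (Function.uncurry (K j))) :
    Measurable (Function.uncurry (comp K k)) := by
  induction k with
  | zero => exact hK 0 le_rfl
  | succ k ih =>
    have hprod : Measurable fun p : (ℝ × ℝ) × ℝ => comp K k p.1.1 p.2 * K (k + 1) p.2 p.1.2 :=
      ((ih fun j hj => hK j (by omega)).comp (measurable_fst.fst.prodMk measurable_snd)).mul
        ((hK (k + 1) le_rfl).comp (measurable_snd.prodMk measurable_fst.snd))
    exact (hprod.stronglyMeasurable.integral_prod_right'
      (ν := volume.restrict (Ioi (0 : ℝ)))).measurable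

variable {η : ℝ} {c : ℕ → ℝ}

theorem lintegral_rpow_mul_integral_mul {q : ℝ → ℝ → ℝ} {L : ℝ → ℝ} {a : ℝ}
    (hq₀ : ∀ x s, 0 < x → 0 < s → 0 ≤ q x s) (hL₀ : ∀ s, 0 < s → 0 ≤ L s)
    (hqm : Measurable (Function.uncurry q)) (hLm : Measurable L)
    (hq : ∀ s, 0 < s →
      ∫⁻ x in Ioi 0, ENNReal.ofReal (x ^ (η - 1) * q x s) = ENNReal.ofReal (s ^ (η - 1) * a))
    (hL : ∫⁻ s in Ioi 0, ENNReal.ofReal (s ^ (η - 1) * L s) ≠ ∞) :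
    ∫⁻ x in Ioi 0, ENNReal.ofReal (x ^ (η - 1) * ∫ s in Ioi 0, q x s * L s)
      = ENNReal.ofReal a * ∫⁻ s in Ioi 0, ENNReal.ofReal (s ^ (η - 1) * L s) := by
  set f : ℝ → ℝ → ℝ := fun x s => x ^ (η - 1) * q x s * L s
  have hf : Measurable (Function.uncurry f) :=
    ((measurable_fst.pow_const _).mul hqm).mul (hLm.comp measurable_snd)
  have hf₀ : ∀ᵐ x ∂volume.restrict (Ioi (0 : ℝ)), ∀ᵐ s ∂volume.restrict (Ioi (0 : ℝ)),
      0 ≤ f x s := by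
    filter_upwards [ae_restrict_mem measurableSet_Ioi] with x (hx : 0 < x)
    filter_upwards [ae_restrict_mem measurableSet_Ioi] with s (hs : 0 < s)
    exact mul_nonneg (mul_nonneg (rpow_nonneg hx.le _) (hq₀ x s hx hs)) (hL₀ s hs)
  have hdouble : ∫⁻ x in Ioi 0, ∫⁻ s in Ioi 0, ENNReal.ofReal (f x s)
      = ENNReal.ofReal a * ∫⁻ s in Ioi 0, ENNReal.ofReal (s ^ (η - 1) * L s) := by
    rw [lintegral_lintegral_swap (f := fun x s => ENNReal.ofReal (f x s))
      (ENNReal.measurable_ofReal.comp hf).aemeasurable,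
      ← lintegral_const_mul' _ _ ENNReal.ofReal_ne_top]
    refine setLIntegral_congr_fun measurableSet_Ioi fun s (hs : 0 < s) => ?_
    rw [setLIntegral_congr_fun measurableSet_Ioi fun x (hx : 0 < x) =>
        ENNReal.ofReal_mul (mul_nonneg (rpow_nonneg hx.le _) (hq₀ x s hx hs)),
      lintegral_mul_const' _ _ ENNReal.ofReal_ne_top, hq s hs,
      ENNReal.ofReal_mul (rpow_nonneg hs.le _), ENNReal.ofReal_mul (rpow_nonneg hs.le _)]
    ring
  calc ∫⁻ x in Ioi 0, ENNReal.ofReal (x ^ (η - 1) * ∫ s in Ioi 0, q x s * L s)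
      = ∫⁻ x in Ioi 0, ENNReal.ofReal (∫ s in Ioi 0, f x s) := by
        simp only [f, mul_assoc, integral_const_mul]
    _ = _ := by
        rw [lintegral_ofReal_integral_eq_lintegral_lintegral hf hf₀
          (hdouble ▸ ENNReal.mul_ne_top ENNReal.ofReal_ne_top hL), hdouble]

theorem lintegral_rpow_mul_comp {k : ℕ} (hK₀ : ∀ j ≤ k, ∀ x s, 0 < x → 0 < s → 0 ≤ K j x s)
    (hKm : ∀ j ≤ k, Measurable (Function.uncurry (K j))) (hc : ∀ j ≤ k, 0 ≤ c j)
    (hKc : ∀ j ≤ k, ∀ s, 0 < s →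
      ∫⁻ x in Ioi 0, ENNReal.ofReal (x ^ (η - 1) * K j x s) = ENNReal.ofReal (s ^ (η - 1) * c j))
    {t : ℝ} (ht : 0 < t) :
    ∫⁻ x in Ioi 0, ENNReal.ofReal (x ^ (η - 1) * comp K k x t)
      = ENNReal.ofReal (t ^ (η - 1) * ∏ j ∈ Finset.range (k + 1), c j) := by
  induction k generalizing t with
  | zero => simpa [comp] using hKc 0 le_rfl t ht
  | succ k ih =>
    have hK₀' : ∀ j ≤ k, ∀ x s, 0 < x → 0 < s → 0 ≤ K j x s := fun j hj => hK₀ j (by omega)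
    have hKm' : ∀ j ≤ k, Measurable (Function.uncurry (K j)) := fun j hj => hKm j (by omega)
    have hP : 0 ≤ ∏ j ∈ Finset.range (k + 1), c j :=
      Finset.prod_nonneg fun j hj => hc j (by simp at hj; omega)
    have hKt := hKc (k + 1) le_rfl t ht
    rw [comp, lintegral_rpow_mul_integral_mul (fun x s hx hs => comp_nonneg hK₀' hx hs)
        (fun s hs => hK₀ (k + 1) le_rfl s t hs ht) (measurable_uncurry_comp hKm')
        ((hKm (k + 1) le_rfl).comp (measurable_id.prodMk measurable_const))
        (fun s hs => ih hK₀' hKm' (fun j hj => hc j (by omega)) (fun j hj => hKc j (by omega)) hs)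
        (hKt ▸ ENNReal.ofReal_ne_top),
      hKt, ← ENNReal.ofReal_mul hP, Finset.prod_range_succ _ (k + 1)]
    congr 1
    ring

theorem integral_rpow_mul_comp {k : ℕ} (hK₀ : ∀ j ≤ k, ∀ x s, 0 < x → 0 < s → 0 ≤ K j x s)
    (hKm : ∀ j ≤ k, Measurable (Function.uncurry (K j))) (hc : ∀ j ≤ k, 0 < c j)
    (hKc : ∀ j ≤ k, ∀ s, 0 < s → ∫ x in Ioi 0, x ^ (η - 1) * K j x s = s ^ (η - 1) * c j)
    {t : ℝ} (ht : 0 < t) :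
    ∫ x in Ioi 0, x ^ (η - 1) * comp K k x t = t ^ (η - 1) * ∏ j ∈ Finset.range (k + 1), c j := by
  have hnonneg : ∀ {g : ℝ → ℝ}, (∀ x, 0 < x → 0 ≤ g x) →
      0 ≤ᵐ[volume.restrict (Ioi 0)] fun x => x ^ (η - 1) * g x := fun hg =>
    (ae_restrict_iff' measurableSet_Ioi).2 (.of_forall fun x (hx : 0 < x) =>
      mul_nonneg (rpow_nonneg hx.le _) (hg x hx))
  -- A nonzero Bochner integral certifies integrability, so the multipliers pass to `lintegral`.
  have hKc' : ∀ j ≤ k, ∀ s, 0 < s → ∫⁻ x in Ioi 0, ENNReal.ofReal (x ^ (η - 1) * K j x s)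
      = ENNReal.ofReal (s ^ (η - 1) * c j) := fun j hj s hs => by
    have hne : ∫ x in Ioi 0, x ^ (η - 1) * K j x s ≠ 0 := by
      rw [hKc j hj s hs]; exact (mul_pos (rpow_pos_of_pos hs _) (hc j hj)).ne'
    rw [← hKc j hj s hs, ofReal_integral_eq_lintegral_ofReal (.of_integral_ne_zero hne)
      (hnonneg fun x hx => hK₀ j hj x s hx hs)]
  have hmeas : AEStronglyMeasurable (fun x => x ^ (η - 1) * comp K k x t)
      (volume.restrict (Ioi 0)) :=
    ((measurable_id.pow_const _).mul ((measurable_uncurry_comp hKm).comp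
      (measurable_id.prodMk measurable_const))).aestronglyMeasurable
  rw [integral_eq_lintegral_of_nonneg_ae (hnonneg fun x hx => comp_nonneg hK₀ hx ht) hmeas,
    lintegral_rpow_mul_comp hK₀ hKm (fun j hj => (hc j hj).le) hKc' ht, ENNReal.toReal_ofReal]
  exact mul_nonneg (rpow_nonneg ht.le _)
    (Finset.prod_nonneg fun j hj => (hc j (by simp at hj; omega)).le)

end Composition

section Kernels

variable {μ γ η t : ℝ}

theorem integral_rpow_mul_Qt (hγ : 0 < γ) (ht : 0 < t) (hη : 1 - γ * μ < η) :
    ∫ x in Ioi 0, x ^ (η - 1) * Qt x t μ γ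
      = t ^ (η - 1) * (Gamma ((η - 1) / γ + μ) / Gamma μ) := by
  have hscale : ∀ y ∈ Ioi (0 : ℝ), (t * y) ^ (η - 1) * Qt (t * y) t μ γ
      = t ^ (η - 1) * (γ / (t * Gamma μ)) * (y ^ (η + γ * μ - 2) * exp (-y ^ γ)) := by
    intro y (hy : 0 < y)
    rw [Qt, mul_div_cancel_left₀ _ ht.ne', mul_rpow ht.le hy.le,
      show η + γ * μ - 2 = (η - 1) + (μ * γ - 1) by ring, rpow_add hy]
    ring
  calc ∫ x in Ioi 0, x ^ (η - 1) * Qt x t μ γ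
      = t * ∫ y in Ioi 0, (t * y) ^ (η - 1) * Qt (t * y) t μ γ := by
        rw [integral_comp_mul_left_Ioi (fun x => x ^ (η - 1) * Qt x t μ γ) 0 ht, mul_zero,
          smul_eq_mul, mul_inv_cancel_left₀ ht.ne']
    _ = t * (t ^ (η - 1) * (γ / (t * Gamma μ)) * (1 / γ * Gamma ((η - 1) / γ + μ))) := by
        rw [setIntegral_congr_fun measurableSet_Ioi hscale, integral_const_mul,
          integral_rpow_mul_exp_neg_rpow hγ (by linarith),
          show (η + γ * μ - 2 + 1) / γ = (η - 1) / γ + μ by field_simp; ring]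
    _ = _ := by field_simp

theorem Qtm_inv {x : ℝ} (hx : 0 < x) (ht : 0 < t) : Qtm x⁻¹ t μ γ = x ^ 2 * Qt x t⁻¹ μ γ := by
  have hxt : 0 < x * t := mul_pos hx ht
  rw [Qtm, Qt, show x⁻¹ / t = (x * t)⁻¹ by field_simp, show t / x⁻¹ = x * t by field_simp,
    show x / t⁻¹ = x * t by field_simp, inv_rpow hxt.le, ← rpow_neg hxt.le,
    show -(-(μ * γ) - 1) = (μ * γ - 1) + 2 by ring, rpow_add hxt, rpow_two]
  field_simp

theorem integral_rpow_mul_Qtm (hγ : 0 < γ) (ht : 0 < t) (hη : η < 1 + γ * μ) :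
    ∫ x in Ioi 0, x ^ (η - 1) * Qtm x t μ γ
      = t ^ (η - 1) * (Gamma ((1 - η) / γ + μ) / Gamma μ) := by
  have hinv : ∀ y ∈ Ioi (0 : ℝ), (|(-1 : ℝ)| * y ^ ((-1 : ℝ) - 1)) •
      ((y ^ (-1 : ℝ)) ^ (η - 1) * Qtm (y ^ (-1 : ℝ)) t μ γ)
        = y ^ ((2 - η) - 1) * Qt y t⁻¹ μ γ := by
    intro y (hy : 0 < y)
    rw [rpow_neg_one, Qtm_inv hy ht, inv_rpow hy.le, ← rpow_neg hy.le, smul_eq_mul, abs_neg,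
      abs_one, one_mul, ← rpow_two, ← mul_assoc, ← mul_assoc, ← rpow_add hy, ← rpow_add hy]
    ring_nf
  rw [← integral_comp_rpow_Ioi _ (by norm_num : (-1 : ℝ) ≠ 0),
    setIntegral_congr_fun measurableSet_Ioi hinv,
    integral_rpow_mul_Qt hγ (inv_pos.2 ht) (by linarith), inv_rpow ht.le, ← rpow_neg ht.le]
  ring_nf

variable (b : Bool)

theorem measurable_ite_Qt_Qtm :
    Measurable (Function.uncurry fun x t => if b then Qt x t μ γ else Qtm x t μ γ) := by
  unfold Qt Qtm; split_ifs <;> fun_prop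

theorem ite_Qt_Qtm_nonneg (hμ : 0 ≤ μ) (hγ : 0 ≤ γ) {x : ℝ} (hx : 0 ≤ x) (ht : 0 ≤ t) :
    0 ≤ if b then Qt x t μ γ else Qtm x t μ γ := by
  have := Gamma_nonneg_of_nonneg hμ
  unfold Qt Qtm; split_ifs <;> positivity

theorem integral_rpow_mul_ite_Qt_Qtm (hγ : 0 < γ) (ht : 0 < t)
    (h₁ : b = true → 1 - γ * μ < η) (h₂ : b = false → η < 1 + γ * μ) :
    ∫ x in Ioi 0, x ^ (η - 1) * (if b then Qt x t μ γ else Qtm x t μ γ)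
      = t ^ (η - 1) * ((if b then Gamma ((η - 1) / γ + μ) else Gamma ((1 - η) / γ + μ))
          / Gamma μ) := by
  cases b
  · simpa using integral_rpow_mul_Qtm hγ ht (h₂ rfl)
  · simpa using integral_rpow_mul_Qt hγ ht (h₁ rfl)

theorem ite_Gamma_div_Gamma_pos (hμ : 0 < μ) (hγ : 0 < γ)
    (h₁ : b = true → 1 - γ * μ < η) (h₂ : b = false → η < 1 + γ * μ) :
    0 < (if b then Gamma ((η - 1) / γ + μ) else Gamma ((1 - η) / γ + μ)) / Gamma μ := by
  refine div_pos ?_ (Gamma_pos_of_pos hμ)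
  cases b
  · have := h₂ rfl
    rw [if_neg Bool.false_ne_true, div_add' _ _ _ hγ.ne']
    exact Gamma_pos_of_pos (div_pos (by linarith) hγ)
  · have := h₁ rfl
    rw [if_pos rfl, div_add' _ _ _ hγ.ne']
    exact Gamma_pos_of_pos (div_pos (by linarith) hγ)

end Kernels

/-- the Mellin transform of the `n`-fold composition of generalized Gamma
(or inverse generalized Gamma, according to the signs `ε`) processes equals
`t^(η−1) ∏ φ_j / Γ(μ)`, which is also the product of the Mellin transforms of the
`n` individual kernels evaluated at time `t^(1/n)`. -/
theorem stmt_6 (μ : ℝ) (hμ : 0 < μ) (n : ℕ) (hn : 1 ≤ n)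
    (γ : ℕ → ℝ) (hγ : ∀ j < n, 0 < γ j)
    (ε : ℕ → Bool)
    (K : ℕ → ℝ → ℝ → ℝ)
    (hK : ∀ j, K j = fun x t => if ε j then Qt x t μ (γ j) else Qtm x t μ (γ j))
    (t η : ℝ) (ht : 0 < t)
    (hη₁ : ∀ j < n, ε j = true → 1 - γ j * μ < η)
    (hη₂ : ∀ j < n, ε j = false → η < 1 + γ j * μ) :
    (∫ x in Set.Ioi (0:ℝ), x ^ (η - 1) * comp K (n - 1) x t)
      = t ^ (η - 1) * ∏ j ∈ Finset.range n,
          ((if ε j then Real.Gamma ((η - 1) / γ j + μ)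
            else Real.Gamma ((1 - η) / γ j + μ)) / Real.Gamma μ)
    ∧ (∫ x in Set.Ioi (0:ℝ), x ^ (η - 1) * comp K (n - 1) x t)
        = ∏ j ∈ Finset.range n,
            ∫ x in Set.Ioi (0:ℝ), x ^ (η - 1) * K j x (t ^ ((1:ℝ) / n)) := by
  have hmellin : ∀ j < n, ∀ s, 0 < s → ∫ x in Ioi 0, x ^ (η - 1) * K j x s = s ^ (η - 1) *
      ((if ε j then Gamma ((η - 1) / γ j + μ) else Gamma ((1 - η) / γ j + μ)) / Gamma μ) :=
    fun j hj s hs => by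
      rw [hK]; exact integral_rpow_mul_ite_Qt_Qtm _ (hγ j hj) hs (hη₁ j hj) (hη₂ j hj)
  have hcomp := integral_rpow_mul_comp (k := n - 1)
    (fun j hj x s hx hs => by
      rw [hK]; exact ite_Qt_Qtm_nonneg _ hμ.le (hγ j (by omega)).le hx.le hs.le)
    (fun j _ => by rw [hK]; exact measurable_ite_Qt_Qtm _)
    (fun j hj => ite_Gamma_div_Gamma_pos _ hμ (hγ j (by omega)) (hη₁ j (by omega))
      (hη₂ j (by omega)))
    (fun j hj => hmellin j (by omega)) ht
  rw [Nat.sub_add_cancel hn] at hcomp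
  refine ⟨hcomp, ?_⟩
  rw [hcomp, Finset.prod_congr rfl fun j hj =>
      hmellin j (Finset.mem_range.1 hj) _ (rpow_pos_of_pos ht _),
    Finset.prod_mul_distrib, Finset.prod_const, Finset.card_range,
    ← rpow_mul_natCast (rpow_nonneg ht.le _), ← rpow_mul ht.le]
  congr 2
  field_simp
end

section
/- For every γ > 0, μ₁ > 0, μ₂ > 0, t > 0 and x > 0, the density of the composition of a generalized Gamma process with an independent inverse generalized Gamma process has the explicit closed form ∫₀^∞ γ (x/s)^(μ₁γ−1) e^(−(x/s)^γ) / (s Γ(μ₁)) · γ (s/t)^(−μ₂γ−1) e^(−(t/s)^γ) / (t Γ(μ₂)) ds = γ x^(γμ₁−1) t^(γμ₂) Γ(μ₁+μ₂) / ( (x^γ + t^γ)^(μ₁+μ₂) Γ(μ₁) Γ(μ₂) ). -/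
/-! Substituting `s = 1/y`, the product of the two densities times the Jacobian `1/y²` is a
constant multiple of `y ^ ((μ₁ + μ₂) γ - 1) * exp (-(x ^ γ + t ^ γ) y ^ γ)`, and the integral
of that over `(0, ∞)` is `Γ(μ₁ + μ₂) / (γ (x ^ γ + t ^ γ) ^ (μ₁ + μ₂))`. -/

open MeasureTheory Real Set

/-- `Q̃(x; t, μ, γ)`. -/
noncomputable def genGammaDensity (t μ γ x : ℝ) : ℝ :=
  γ * (x / t) ^ (μ * γ - 1) * exp (-((x / t) ^ γ)) / (t * Gamma μ)

/-- `Q̃₋(x; t, μ, γ)`. -/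
noncomputable def invGenGammaDensity (t μ γ x : ℝ) : ℝ :=
  γ * (x / t) ^ (-(μ * γ) - 1) * exp (-((t / x) ^ γ)) / (t * Gamma μ)

theorem integral_Ioi_eq_integral_inv_sq_smul_comp_inv {E : Type*} [NormedAddCommGroup E]
    [NormedSpace ℝ E] (f : ℝ → E) :
    ∫ s in Ioi 0, f s = ∫ y in Ioi 0, (y ^ 2)⁻¹ • f y⁻¹ := by
  rw [← integral_comp_rpow_Ioi f (p := -1) (by norm_num)]
  refine setIntegral_congr_fun measurableSet_Ioi fun y hy => ?_
  have hsq : y ^ ((-1 : ℝ) - 1) = (y ^ 2)⁻¹ := by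
    rw [show (-1 : ℝ) - 1 = -(2 : ℕ) by norm_num, rpow_neg hy.le, rpow_natCast]
  rw [hsq, rpow_neg_one, abs_neg, abs_one, one_mul]

theorem integral_rpow_sub_one_mul_exp_neg_mul_rpow {μ γ b : ℝ} (hμ : 0 < μ) (hγ : 0 < γ)
    (hb : 0 < b) :
    ∫ y in Ioi 0, y ^ (μ * γ - 1) * exp (-b * y ^ γ) = Gamma μ / (γ * b ^ μ) := by
  have hq : -1 < μ * γ - 1 := by nlinarith [mul_pos hμ hγ]
  rw [integral_rpow_mul_exp_neg_mul_rpow hγ hq hb, sub_add_cancel, neg_div,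
    mul_div_cancel_right₀ _ hγ.ne', rpow_neg hb.le]
  field_simp

theorem genGammaDensity_inv {y x : ℝ} (hy : 0 < y) (hx : 0 < x) (μ γ : ℝ) :
    genGammaDensity y⁻¹ μ γ x =
      γ * x ^ (μ * γ - 1) / Gamma μ * (y ^ (μ * γ) * exp (-(x ^ γ * y ^ γ))) := by
  rw [genGammaDensity, div_inv_eq_mul, mul_rpow hx.le hy.le, mul_rpow hx.le hy.le,
    rpow_sub_one hy.ne']
  field_simp

theorem invGenGammaDensity_inv {t y : ℝ} (ht : 0 < t) (hy : 0 < y) (μ γ : ℝ) :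
    invGenGammaDensity t μ γ y⁻¹ =
      γ * t ^ (μ * γ) / Gamma μ * (y ^ (μ * γ + 1) * exp (-(t ^ γ * y ^ γ))) := by
  have hinv : y⁻¹ / t = (t * y)⁻¹ := by rw [mul_inv, div_eq_inv_mul]
  rw [invGenGammaDensity, hinv, div_inv_eq_mul, inv_rpow (by positivity),
    ← rpow_neg (by positivity), neg_sub_left, neg_neg, add_comm 1, mul_rpow ht.le hy.le,
    mul_rpow ht.le hy.le, rpow_add_one ht.ne']
  field_simp

theorem inv_sq_mul_genGammaDensity_inv_mul_invGenGammaDensity_inv {t x y : ℝ} (ht : 0 < t)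
    (hx : 0 < x) (hy : 0 < y) (μ₁ μ₂ γ : ℝ) :
    (y ^ 2)⁻¹ * (genGammaDensity y⁻¹ μ₁ γ x * invGenGammaDensity t μ₂ γ y⁻¹) =
      γ ^ 2 * x ^ (μ₁ * γ - 1) * t ^ (μ₂ * γ) / (Gamma μ₁ * Gamma μ₂) *
        (y ^ ((μ₁ + μ₂) * γ - 1) * exp (-(x ^ γ + t ^ γ) * y ^ γ)) := by
  have hpow : y ^ ((μ₁ + μ₂) * γ - 1) = (y ^ 2)⁻¹ * (y ^ (μ₁ * γ) * y ^ (μ₂ * γ + 1)) := by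
    rw [← rpow_add hy, ← rpow_two, ← rpow_neg hy.le, ← rpow_add hy]
    ring_nf
  have hexp : exp (-(x ^ γ * y ^ γ)) * exp (-(t ^ γ * y ^ γ)) =
      exp (-(x ^ γ + t ^ γ) * y ^ γ) := by
    rw [← exp_add]
    ring_nf
  rw [genGammaDensity_inv hy hx, invGenGammaDensity_inv ht hy, ← hexp, hpow]
  ring

theorem integral_genGammaDensity_mul_invGenGammaDensity {γ μ₁ μ₂ t x : ℝ} (hγ : 0 < γ)
    (hμ₁ : 0 < μ₁) (hμ₂ : 0 < μ₂) (ht : 0 < t) (hx : 0 < x) :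
    ∫ s in Ioi 0, genGammaDensity s μ₁ γ x * invGenGammaDensity t μ₂ γ s =
      γ * x ^ (γ * μ₁ - 1) * t ^ (γ * μ₂) * Gamma (μ₁ + μ₂) /
        ((x ^ γ + t ^ γ) ^ (μ₁ + μ₂) * Gamma μ₁ * Gamma μ₂) := by
  have hc : 0 < x ^ γ + t ^ γ := by positivity
  rw [integral_Ioi_eq_integral_inv_sq_smul_comp_inv]
  simp only [smul_eq_mul]
  rw [setIntegral_congr_fun measurableSet_Ioi fun y hy =>
      inv_sq_mul_genGammaDensity_inv_mul_invGenGammaDensity_inv ht hx hy μ₁ μ₂ γ,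
    integral_const_mul, integral_rpow_sub_one_mul_exp_neg_mul_rpow (by positivity) hγ hc,
    mul_comm γ μ₁, mul_comm γ μ₂]
  field_simp

/-- the density of the composition `G̃¹_γ(G̃²_{−γ}(t))` of a generalized
Gamma process with an independent inverse generalized Gamma process satisfies
`∫₀^∞ Q̃(x;s,μ₁,γ) Q̃₋(s;t,μ₂,γ) ds
  = γ x^(γμ₁−1) t^(γμ₂) Γ(μ₁+μ₂) / ((x^γ + t^γ)^(μ₁+μ₂) Γ(μ₁) Γ(μ₂))`. -/
theorem stmt_7 (γ μ₁ μ₂ t x : ℝ) (hγ : 0 < γ) (hμ₁ : 0 < μ₁) (hμ₂ : 0 < μ₂)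
    (ht : 0 < t) (hx : 0 < x) :
    (∫ s in Set.Ioi (0:ℝ),
        (γ * (x / s) ^ (μ₁ * γ - 1) * Real.exp (-((x / s) ^ γ)) / (s * Real.Gamma μ₁)) *
          (γ * (s / t) ^ (-(μ₂ * γ) - 1) * Real.exp (-((t / s) ^ γ)) / (t * Real.Gamma μ₂)))
      = γ * x ^ (γ * μ₁ - 1) * t ^ (γ * μ₂) * Real.Gamma (μ₁ + μ₂)
          / ((x ^ γ + t ^ γ) ^ (μ₁ + μ₂) * Real.Gamma μ₁ * Real.Gamma μ₂) :=
  integral_genGammaDensity_mul_invGenGammaDensity hγ hμ₁ hμ₂ ht hx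
end
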